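/- arXiv:math/0208037 — 2 statements merged into one kernel-verified Lean document; each statement's English description precedes it below -/
import Mathlib

section
/- Let $p$ be a prime, $q = p^m$ with $m \geq 1$, and let $K$ be an algebraically closed field of characteristic $p$. The set $\mathfrak{S}_{00} = \{(a,b) \in K^2 : a b^q - a^q b = 1,\ a^{q^2} = -a,\ b^{q^2} = -b\}$ has exactly $q^3 - q$ elements. -/
open Polynomial

/-- In an algebraically closed field, a separable polynomial has exactly
`natDegree` distinct roots. -/
lemma aux_card_roots {K : Type*} [Field K] [IsAlgClosed K] [DecidableEq K] (f : K[X])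
    (hsep : f.Separable) : f.roots.toFinset.card = f.natDegree := by
  rw [Multiset.toFinset_card_of_nodup (Polynomial.nodup_roots hsep)]
  exact Polynomial.splits_iff_card_roots.mp (IsAlgClosed.splits f)

/-- `natDegree (X^n - X) = n` and nonvanishing, for `2 ≤ n`. -/
lemma aux_XnX {K : Type*} [Field K] (n : ℕ) (hn : 2 ≤ n) :
    ((X : K[X]) ^ n - X).natDegree = n ∧ ((X : K[X]) ^ n - X) ≠ 0 := by
  have hlt : (X : K[X]).degree < ((X : K[X]) ^ n).degree := by
    rw [Polynomial.degree_X, Polynomial.degree_X_pow]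
    exact_mod_cast (by omega : 1 < n)
  have hdeg : ((X : K[X]) ^ n - X).degree = (n : WithBot ℕ) := by
    rw [Polynomial.degree_sub_eq_left_of_degree_lt hlt, Polynomial.degree_X_pow]
  constructor
  · exact Polynomial.natDegree_eq_of_degree_eq_some hdeg
  · intro h
    rw [h, Polynomial.degree_zero] at hdeg
    exact (by simp : (⊥ : WithBot ℕ) ≠ (n : WithBot ℕ)) hdeg

theorem stmt_6 (p m q : ℕ) (hp : p.Prime) (hm : 1 ≤ m) (hq : q = p ^ m)
    (K : Type*) [Field K] [IsAlgClosed K] (hchar : CharP K p) :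
    {x : K × K | x.1 * x.2 ^ q - x.1 ^ q * x.2 = 1 ∧
      x.1 ^ (q ^ 2) = -x.1 ∧ x.2 ^ (q ^ 2) = -x.2}.ncard = q ^ 3 - q := by
  classical
  haveI : Fact p.Prime := ⟨hp⟩
  have hq2 : 2 ≤ q := by
    rw [hq]
    calc 2 ≤ p := hp.two_le
    _ = p ^ 1 := (pow_one p).symm
    _ ≤ p ^ m := Nat.pow_le_pow_right hp.pos hm
  have hq0 : q ≠ 0 := by omega
  have hqK : (q : K) = 0 := by
    rw [hq]
    push_cast
    rw [CharP.cast_eq_zero K p]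
    exact zero_pow (by omega)
  -- Frobenius identity: (x - y)^q = x^q - y^q
  have hfrob : ∀ x y : K, (x - y) ^ q = x ^ q - y ^ q := by
    intro x y
    rw [hq]
    exact sub_pow_char_pow x y m
  -- the polynomials
  set f2 : K[X] := X ^ (q ^ 2) - X with hf2def
  set f1 : K[X] := X ^ q - X with hf1def
  have hf2 := aux_XnX (K := K) (q ^ 2) (by nlinarith)
  have hf1 := aux_XnX (K := K) q hq2
  have hf2sep : f2.Separable := by
    apply galois_poly_separable p (q ^ 2)
    rw [hq]
    exact dvd_pow (dvd_pow_self p (by omega)) (by omega)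
  have hf1sep : f1.Separable := by
    apply galois_poly_separable p q
    rw [hq]
    exact dvd_pow_self p (by omega)
  -- membership characterizations
  have hmem2 : ∀ x : K, x ∈ f2.roots.toFinset ↔ x ^ (q ^ 2) = x := by
    intro x
    rw [Multiset.mem_toFinset, Polynomial.mem_roots hf2.2]
    simp [hf2def, Polynomial.IsRoot, sub_eq_zero]
  have hmem1 : ∀ x : K, x ∈ f1.roots.toFinset ↔ x ^ q = x := by
    intro x
    rw [Multiset.mem_toFinset, Polynomial.mem_roots hf1.2]
    simp [hf1def, Polynomial.IsRoot, sub_eq_zero]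
  set C : Finset K := f2.roots.toFinset \ f1.roots.toFinset with hCdef
  have hmemC : ∀ c : K, c ∈ C ↔ c ^ (q ^ 2) = c ∧ ¬ c ^ q = c := by
    intro c
    rw [hCdef, Finset.mem_sdiff, hmem2, hmem1]
  -- the fiber polynomials
  set g : K → K[X] := fun c => X ^ (q + 1) - Polynomial.C ((c ^ q - c)⁻¹) with hgdef
  have hgne : ∀ c : K, g c ≠ 0 := by
    intro c
    exact X_pow_sub_C_ne_zero (by omega) _
  have hmemg : ∀ c a : K, a ∈ (g c).roots.toFinset ↔ a ^ (q + 1) = (c ^ q - c)⁻¹ := by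
    intro c a
    rw [Multiset.mem_toFinset, Polynomial.mem_roots (hgne c)]
    simp [hgdef, Polynomial.IsRoot, sub_eq_zero]
  have hgsep : ∀ c : K, c ^ q ≠ c → (g c).Separable := by
    intro c hc
    apply Polynomial.separable_X_pow_sub_C
    · push_cast
      rw [hqK]
      simp
    · exact inv_ne_zero (sub_ne_zero.mpr hc)
  -- key fact: (c^q - c)^(q-1) = -1 for c with c^(q^2) = c, c^q ≠ c
  have hkey : ∀ c : K, c ^ (q ^ 2) = c → c ^ q ≠ c → (c ^ q - c) ^ (q - 1) = -1 := by
    intro c h2 hne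
    have hcc : c ^ q - c ≠ 0 := sub_ne_zero.mpr hne
    have h3 : (c ^ q - c) ^ q = -(c ^ q - c) := by
      rw [hfrob]
      rw [← pow_mul, ← pow_two, h2]
      ring
    have h4 : (c ^ q - c) ^ (q - 1) * (c ^ q - c) = (-1) * (c ^ q - c) := by
      rw [← pow_succ]
      have : q - 1 + 1 = q := by omega
      rw [this, h3]
      ring
    exact mul_right_cancel₀ hcc h4
  -- the big finset
  set T : Finset (K × K) :=
    C.biUnion (fun c => ((g c).roots.toFinset).image (fun a => (a, a * c))) with hTdef
  -- first: elements of fibers are nonzero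
  have hfib0 : ∀ c ∈ C, ∀ a ∈ (g c).roots.toFinset, a ≠ 0 := by
    intro c hc a ha
    rw [hmemg] at ha
    rw [hmemC] at hc
    intro h0
    rw [h0, zero_pow (by omega : q + 1 ≠ 0)] at ha
    exact inv_ne_zero (sub_ne_zero.mpr hc.2) ha.symm
  -- set equality
  have hSeq : {x : K × K | x.1 * x.2 ^ q - x.1 ^ q * x.2 = 1 ∧
      x.1 ^ (q ^ 2) = -x.1 ∧ x.2 ^ (q ^ 2) = -x.2} = ↑T := by
    ext ⟨a, b⟩
    simp only [Set.mem_setOf_eq, Finset.coe_biUnion, Set.mem_iUnion, Finset.mem_coe,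
      Finset.mem_image, hTdef, Finset.mem_biUnion]
    constructor
    · rintro ⟨h1, h2, h3⟩
      have ha0 : a ≠ 0 := by
        intro h0
        rw [h0, zero_mul, zero_pow hq0, zero_mul, sub_zero] at h1
        exact one_ne_zero h1.symm
      set c : K := b / a with hcdef
      have hac : a * c = b := by rw [hcdef]; field_simp
      have h1' : a ^ (q + 1) * (c ^ q - c) = 1 := by
        rw [← hac, mul_pow] at h1
        calc a ^ (q + 1) * (c ^ q - c) = a * (a ^ q * c ^ q) - a ^ q * (a * c) := by ring
        _ = 1 := h1
      have hcc : c ^ q - c ≠ 0 := by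
        intro h
        rw [h, mul_zero] at h1'
        exact one_ne_zero h1'.symm
      have hafib : a ^ (q + 1) = (c ^ q - c)⁻¹ := eq_inv_of_mul_eq_one_right (by linear_combination h1')
      have hc2 : c ^ (q ^ 2) = c := by
        rw [hcdef, div_pow, h2, h3, neg_div_neg_eq]
      refine ⟨c, ?_, a, ?_, ?_⟩
      · rw [hmemC]
        exact ⟨hc2, fun h => hcc (by rw [h, sub_self])⟩
      · rw [hmemg]; exact hafib
      · rw [hac]
    · rintro ⟨c, hc, a, ha, heq⟩
      have ha0 : a ≠ 0 := hfib0 c hc a ha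
      rw [hmemg] at ha
      rw [hmemC] at hc
      obtain ⟨hc2, hcq⟩ := hc
      have hcc : c ^ q - c ≠ 0 := sub_ne_zero.mpr hcq
      injection heq with heq1 heq2
      subst heq1
      subst heq2
      have haq2 : a ^ (q ^ 2) = -a := by
        have hexp : q ^ 2 = (q + 1) * (q - 1) + 1 := by
          obtain ⟨k, rfl⟩ : ∃ k, q = k + 2 := ⟨q - 2, by omega⟩
          have e1 : (k + 2) ^ 2 = k ^ 2 + 4 * k + 4 := by ring
          have e2 : (k + 2 + 1) * (k + 2 - 1) = k ^ 2 + 4 * k + 3 := by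
            have : k + 2 - 1 = k + 1 := by omega
            rw [this]; ring
          omega
        rw [hexp, pow_succ, pow_mul, ha]
        rw [inv_pow, hkey c hc2 hcq, inv_neg, inv_one]
        ring
      refine ⟨?_, haq2, ?_⟩
      · calc a * (a * c) ^ q - a ^ q * (a * c)
            = a ^ (q + 1) * (c ^ q - c) := by rw [mul_pow]; ring
        _ = (c ^ q - c)⁻¹ * (c ^ q - c) := by rw [ha]
        _ = 1 := inv_mul_cancel₀ hcc
      · rw [mul_pow, haq2, hc2]
        ring
  rw [hSeq, Set.ncard_coe_finset]
  -- card of T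
  have hTcard : T.card = C.card * (q + 1) := by
    rw [hTdef, Finset.card_biUnion]
    · have : ∀ c ∈ C, (((g c).roots.toFinset).image (fun a => (a, a * c))).card = q + 1 := by
        intro c hc
        rw [Finset.card_image_of_injective _ (fun a a' h => congrArg Prod.fst h)]
        rw [aux_card_roots (g c) (hgsep c ((hmemC c).mp hc).2)]
        rw [hgdef]
        exact Polynomial.natDegree_X_pow_sub_C
      rw [Finset.sum_congr rfl this, Finset.sum_const, smul_eq_mul]
    · intro c hc c' hc' hne
      rw [Function.onFun, Finset.disjoint_left]
      rintro ⟨x, y⟩ hx hy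
      simp only [Finset.mem_image] at hx hy
      obtain ⟨a, ha, hax⟩ := hx
      obtain ⟨a', ha', hax'⟩ := hy
      have h1 : a = x := congrArg Prod.fst hax
      have h1' : a' = x := congrArg Prod.fst hax'
      have h2 : a * c = y := congrArg Prod.snd hax
      have h2' : a' * c' = y := congrArg Prod.snd hax'
      have ha0 : a ≠ 0 := hfib0 c hc a ha
      apply hne
      subst h1
      rw [h1'] at h2'
      exact mul_left_cancel₀ ha0 (h2.trans h2'.symm)
  rw [hTcard]
  -- card of C
  have hsub : f1.roots.toFinset ⊆ f2.roots.toFinset := by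
    intro x hx
    rw [hmem1] at hx
    rw [hmem2, pow_two, pow_mul, hx, hx]
  have hCcard : C.card = q ^ 2 - q := by
    rw [hCdef, Finset.card_sdiff_of_subset hsub, aux_card_roots f2 hf2sep, aux_card_roots f1 hf1sep,
      hf2.1, hf1.1]
  rw [hCcard]
  -- arithmetic
  obtain ⟨k, rfl⟩ : ∃ k, q = k + 2 := ⟨q - 2, by omega⟩
  have e1 : (k + 2) ^ 2 = k ^ 2 + 4 * k + 4 := by ring
  have e0 : (k + 2) ^ 2 - (k + 2) = k ^ 2 + 3 * k + 2 := by omega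
  rw [e0]
  have e2 : (k + 2) ^ 3 = k ^ 3 + 6 * k ^ 2 + 12 * k + 8 := by ring
  have e3 : (k ^ 2 + 3 * k + 2) * (k + 2 + 1) = k ^ 3 + 6 * k ^ 2 + 11 * k + 6 := by ring
  omega
end

section
/- Let $p$ be a prime, $q = p^m$ with $m \geq 1$, and let $K$ be an algebraically closed field of characteristic $p$. The set $\{(a, b) \in K^2 : a^{q+1} = 1 \text{ and } a \cdot b^q + a^q \cdot b = 0\}$ has exactly $q^2 + q$ elements. -/
/-!
The first coordinate runs over the roots of the separable polynomial `X ^ (q + 1) - 1`, of which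
there are `q + 1`. Each such `a` is nonzero, and since `q = 0` in `K` the polynomial
`a X ^ q + a ^ q X` has the nonzero constant `a ^ q` as derivative, so it is separable of degree
`q` and each fibre has exactly `q` points.
-/

open Polynomial

theorem Set.encard_eq_mul_of_encard_fibers {α β : Type*} {S : Set (α × β)} {A : Set α}
    {k : ℕ∞} (hA : A.Finite) (hS : ∀ x ∈ S, x.1 ∈ A)
    (hk : ∀ a ∈ A, {b | (a, b) ∈ S}.encard = k) : S.encard = A.encard * k := by
  have hS_eq : S = ⋃ a ∈ A, {a} ×ˢ {b | (a, b) ∈ S} := by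
    ext ⟨a, b⟩
    simp only [Set.mem_iUnion, Set.mem_prod, Set.mem_singleton_iff, Set.mem_ofPred_eq]
    exact ⟨fun h => ⟨a, hS _ h, rfl, h⟩, fun ⟨_, _, rfl, h⟩ => h⟩
  have hdisj : A.PairwiseDisjoint fun a => ({a} ×ˢ {b | (a, b) ∈ S} : Set (α × β)) :=
    fun a _ a' _ hne => Set.disjoint_left.mpr fun x hx hx' => hne (hx.1.symm.trans hx'.1)
  rw [hS_eq, hA.encard_biUnion hdisj, finsum_mem_congr rfl fun a ha => by
    rw [Set.encard_prod, Set.encard_singleton, one_mul, hk a ha]]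
  rw [finsum_mem_eq_finite_toFinset_sum _ hA, Finset.sum_const, nsmul_eq_mul,
    ← Set.encard_coe_eq_coe_finsetCard, Set.Finite.coe_toFinset]

namespace Polynomial

variable {K : Type*} [Field K]

theorem encard_setOf_isRoot_of_separable [IsAlgClosed K] {f : K[X]} (hf : f.Separable) :
    {x | f.IsRoot x}.encard = f.natDegree := by
  classical
  have hroots : {x | f.IsRoot x} = f.roots.toFinset := by
    ext x
    simp [mem_roots hf.ne_zero]
  rw [hroots, Set.encard_coe_eq_coe_finsetCard, Multiset.toFinset_card_of_nodup (nodup_roots hf),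
    ← (IsAlgClosed.splits f).natDegree_eq_card_roots]

theorem separable_C_mul_X_pow_add_C_mul_X {n : ℕ} (hn : (n : K) = 0) (c : K) {d : K}
    (hd : d ≠ 0) : (C c * X ^ n + C d * X).Separable := by
  have hder : derivative (C c * X ^ n + C d * X) = C d * 1 := by
    rw [derivative_add, derivative_C_mul_X_pow, derivative_C_mul_X, hn]
    simp
  rw [separable_def, hder, isCoprime_mul_unit_left_right (isUnit_C.mpr hd.isUnit)]
  exact isCoprime_one_right

theorem natDegree_C_mul_X_pow_add_C_mul_X {n : ℕ} (hn : 1 < n) {c : K} (hc : c ≠ 0) (d : K) :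
    (C c * X ^ n + C d * X).natDegree = n := by
  rw [natDegree_add_eq_left_of_natDegree_lt] <;> rw [natDegree_C_mul_X_pow n c hc]
  exact ((natDegree_C_mul_le d X).trans natDegree_X_le).trans_lt hn

end Polynomial

section IsAlgClosed

variable {K : Type*} [Field K] [IsAlgClosed K]

theorem encard_setOf_pow_eq_one {n : ℕ} (hn : (n : K) ≠ 0) :
    {a : K | a ^ n = 1}.encard = n := by
  have h := encard_setOf_isRoot_of_separable (separable_X_pow_sub_C (1 : K) hn one_ne_zero)
  rw [natDegree_X_pow_sub_C] at h
  simpa [sub_eq_zero] using h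

theorem encard_setOf_mul_pow_add_pow_mul_eq_zero {q : ℕ} (hq : (q : K) = 0) (hq1 : 1 < q)
    {a : K} (ha : a ≠ 0) : {b : K | a * b ^ q + a ^ q * b = 0}.encard = q := by
  have h := encard_setOf_isRoot_of_separable
    (separable_C_mul_X_pow_add_C_mul_X hq a (pow_ne_zero q ha))
  rw [natDegree_C_mul_X_pow_add_C_mul_X hq1 ha] at h
  simpa using h

end IsAlgClosed

theorem stmt_13 (p m q : ℕ) (hp : p.Prime) (hm : 1 ≤ m) (hq : q = p ^ m)
    (K : Type*) [Field K] [IsAlgClosed K] (hchar : CharP K p) :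
    {x : K × K | x.1 ^ (q + 1) = 1 ∧ x.1 * x.2 ^ q + x.1 ^ q * x.2 = 0}.ncard
      = q ^ 2 + q := by
  have hq1 : 1 < q := hq ▸ Nat.one_lt_pow (by omega) hp.one_lt
  have hqK : (q : K) = 0 := (CharP.cast_eq_zero_iff K p q).mpr (hq ▸ dvd_pow_self p (by omega))
  have hbase : {a : K | a ^ (q + 1) = 1}.encard = q + 1 := by
    exact_mod_cast encard_setOf_pow_eq_one (K := K) (n := q + 1) (by simp [hqK])
  have hfiber : ∀ a ∈ {a : K | a ^ (q + 1) = 1},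
      {b | (a, b) ∈ {x : K × K | x.1 ^ (q + 1) = 1 ∧ x.1 * x.2 ^ q + x.1 ^ q * x.2 = 0}}.encard
        = q := by
    intro a (ha : a ^ (q + 1) = 1)
    have ha0 : a ≠ 0 := by rintro rfl; simp at ha
    simpa [ha] using encard_setOf_mul_pow_add_pow_mul_eq_zero hqK hq1 ha0
  rw [Set.ncard_def, Set.encard_eq_mul_of_encard_fibers (Set.finite_of_encard_eq_coe hbase)
    (fun x hx => hx.1) hfiber, hbase]
  have hcount : ((q : ℕ∞) + 1) * q = ((q ^ 2 + q : ℕ) : ℕ∞) := by push_cast; ring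
  rw [hcount, ENat.toNat_natCast]
end
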